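/- arXiv:2105.00743 — 2 statements merged into one kernel-verified Lean document; each statement's English description precedes it below -/
import Mathlib

section
/- Let r be a positive integer and δ ≥ 0. Let X₀,…,X_r be a δ-weak martingale sequence of random variables with values in [0,1], and set Y_i = X_i − X_{i−1} for i ∈ {1,…,r}. Then | 𝔼[X_r² − X₀²] − 𝔼[ Σ_{i=1}^{r} Y_i² ] | ≤ 2rδ. -/
open MeasureTheory

/-!
Since `x_r² - x_0² - ∑ (x_i - x_{i-1})² = 2 ∑ x_{i-1} (x_i - x_{i-1})`, the quantity to bound is
`2 ∑ 𝔼[X_{i-1} Y_i]`. Conditioning on `X_{i-1}` turns `𝔼[X_{i-1} Y_i]` into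
`𝔼[X_{i-1} (𝔼[X_i | X_{i-1}] - X_{i-1})]`, which is at most `δ` in absolute value because
`|X_{i-1}| ≤ 1`.
-/

lemma sq_sub_sq_sub_sum_sq_sub_pred {R : Type*} [CommRing R] (x : ℕ → R) (n : ℕ) :
    x n ^ 2 - x 0 ^ 2 - ∑ i ∈ Finset.Icc 1 n, (x i - x (i - 1)) ^ 2
      = ∑ i ∈ Finset.Icc 1 n, 2 * (x (i - 1) * (x i - x (i - 1))) := by
  induction n with
  | zero => simp
  | succ n ih =>
    rw [Finset.sum_Icc_succ_top (by omega), Finset.sum_Icc_succ_top (by omega), ← ih]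
    simp only [Nat.add_sub_cancel]
    ring

lemma integral_sq_sub_sq_sub_integral_sum_sq_sub_pred {Ω : Type*} [MeasurableSpace Ω]
    {μ : Measure Ω} {X : ℕ → Ω → ℝ} {n : ℕ} (hX : ∀ i ≤ n, MemLp (X i) 2 μ) :
    (∫ ω, (X n ω ^ 2 - X 0 ω ^ 2) ∂μ) - ∫ ω, ∑ i ∈ Finset.Icc 1 n, (X i ω - X (i - 1) ω) ^ 2 ∂μ
      = ∑ i ∈ Finset.Icc 1 n, 2 * ∫ ω, X (i - 1) ω * (X i ω - X (i - 1) ω) ∂μ := by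
  have hincr : ∀ i ∈ Finset.Icc 1 n, MemLp (X (i - 1)) 2 μ ∧ MemLp (X i - X (i - 1)) 2 μ :=
    fun i hi ↦ have hin := (Finset.mem_Icc.mp hi).2
      ⟨hX (i - 1) (by omega), (hX i hin).sub (hX (i - 1) (by omega))⟩
  have hends : Integrable (fun ω ↦ X n ω ^ 2 - X 0 ω ^ 2) μ :=
    (hX n le_rfl).integrable_sq.sub (hX 0 n.zero_le).integrable_sq
  have hsq : Integrable (fun ω ↦ ∑ i ∈ Finset.Icc 1 n, (X i ω - X (i - 1) ω) ^ 2) μ :=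
    integrable_finsetSum _ fun i hi ↦ (hincr i hi).2.integrable_sq
  have hprod : ∀ i ∈ Finset.Icc 1 n,
      Integrable (fun ω ↦ 2 * (X (i - 1) ω * (X i ω - X (i - 1) ω))) μ :=
    fun i hi ↦ ((hincr i hi).1.integrable_mul (hincr i hi).2).const_mul 2
  rw [← integral_sub hends hsq]
  simp only [fun ω ↦ sq_sub_sq_sub_sum_sq_sub_pred (X · ω) n, integral_finsetSum _ hprod,
    integral_const_mul]

section CondExp

variable {Ω : Type*} {m m₀ : MeasurableSpace Ω} {μ : Measure[m₀] Ω}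

lemma integral_mul_eq_integral_mul_condExp {f g : Ω → ℝ} (hm : m ≤ m₀)
    [SigmaFinite (μ.trim hm)] (hf : StronglyMeasurable[m] f) (hfg : Integrable (f * g) μ)
    (hg : Integrable g μ) :
    ∫ ω, f ω * g ω ∂μ = ∫ ω, f ω * μ[g | m] ω ∂μ :=
  calc ∫ ω, f ω * g ω ∂μ = ∫ ω, μ[f * g | m] ω ∂μ := (integral_condExp hm).symm
    _ = ∫ ω, f ω * μ[g | m] ω ∂μ :=
      integral_congr_ae (condExp_mul_of_stronglyMeasurable_left hf hfg hg)

lemma abs_integral_mul_sub_le_of_abs_condExp_sub_le [IsProbabilityMeasure μ] {f g : Ω → ℝ}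
    {C δ : ℝ} (hm : m ≤ m₀) (hf : StronglyMeasurable[m] f) (hfC : ∀ᵐ ω ∂μ, |f ω| ≤ C)
    (hg : Integrable g μ) (hgf : ∀ᵐ ω ∂μ, |μ[g | m] ω - f ω| ≤ δ) :
    |∫ ω, f ω * (g ω - f ω) ∂μ| ≤ C * δ := by
  have hf_meas : AEStronglyMeasurable f μ := (hf.mono hm).aestronglyMeasurable
  have hf_norm : ∀ᵐ ω ∂μ, ‖f ω‖ ≤ C := by simpa only [Real.norm_eq_abs] using hfC
  have hff : Integrable (fun ω ↦ f ω * f ω) μ :=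
    (Integrable.of_bound hf_meas C hf_norm).bdd_mul hf_meas hf_norm
  have hfg : Integrable (fun ω ↦ f ω * g ω) μ := hg.bdd_mul hf_meas hf_norm
  have hfcond : Integrable (fun ω ↦ f ω * μ[g | m] ω) μ :=
    integrable_condExp.bdd_mul hf_meas hf_norm
  have hconditioned : ∫ ω, f ω * (g ω - f ω) ∂μ = ∫ ω, f ω * (μ[g | m] ω - f ω) ∂μ := by
    simp only [mul_sub]
    rw [integral_sub hfg hff, integral_sub hfcond hff,
      integral_mul_eq_integral_mul_condExp hm hf hfg hg]
  rw [hconditioned, ← Real.norm_eq_abs]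
  calc ‖∫ ω, f ω * (μ[g | m] ω - f ω) ∂μ‖ ≤ C * δ * μ.real Set.univ := by
        refine norm_integral_le_of_norm_le_const ?_
        filter_upwards [hfC, hgf] with ω hfω hgfω
        rw [Real.norm_eq_abs, abs_mul]
        exact mul_le_mul hfω hgfω (abs_nonneg _) ((abs_nonneg _).trans hfω)
    _ = C * δ := by simp

end CondExp

theorem weak_martingale_sum_of_squares_expectation_general
    {Ω : Type*} [MeasurableSpace Ω] (μ : Measure Ω) [IsProbabilityMeasure μ]
    (r : ℕ) (δ : ℝ)
    (X : ℕ → Ω → ℝ) (hXmeas : ∀ i, Measurable (X i))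
    (hrange : ∀ i ≤ r, ∀ᵐ ω ∂μ, X i ω ∈ Set.Icc (0 : ℝ) 1)
    (hmart : ∀ i, 1 ≤ i → i ≤ r → ∀ᵐ ω ∂μ,
      |(μ[X i | MeasurableSpace.comap (X (i - 1)) inferInstance]) ω
        - X (i - 1) ω| ≤ δ) :
    |(∫ ω, ((X r ω) ^ 2 - (X 0 ω) ^ 2) ∂μ)
      - ∫ ω, ∑ i ∈ Finset.Icc 1 r, (X i ω - X (i - 1) ω) ^ 2 ∂μ|
      ≤ 2 * r * δ := by
  have hbound : ∀ i ≤ r, ∀ᵐ ω ∂μ, |X i ω| ≤ 1 := fun i hi ↦ by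
    filter_upwards [hrange i hi] with ω hω
    exact abs_le.mpr ⟨by linarith [hω.1], hω.2⟩
  have hL2 : ∀ i ≤ r, MemLp (X i) 2 μ := fun i hi ↦
    .of_bound (hXmeas i).aestronglyMeasurable 1
      (by simpa only [Real.norm_eq_abs] using hbound i hi)
  have hstep : ∀ i ∈ Finset.Icc 1 r, |2 * ∫ ω, X (i - 1) ω * (X i ω - X (i - 1) ω) ∂μ| ≤ 2 * δ :=
    fun i hi ↦ by
      obtain ⟨hi1, hir⟩ := Finset.mem_Icc.mp hi
      rw [abs_mul, abs_two]
      gcongr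
      simpa only [one_mul] using abs_integral_mul_sub_le_of_abs_condExp_sub_le
        (hXmeas (i - 1)).comap_le (Measurable.of_comap_le le_rfl).stronglyMeasurable
        (hbound (i - 1) (by omega)) ((hL2 i hir).integrable one_le_two) (hmart i hi1 hir)
  calc _ = |∑ i ∈ Finset.Icc 1 r, 2 * ∫ ω, X (i - 1) ω * (X i ω - X (i - 1) ω) ∂μ| := by
        rw [integral_sq_sub_sq_sub_integral_sum_sq_sub_pred hL2]
    _ ≤ ∑ i ∈ Finset.Icc 1 r, 2 * δ :=
        (Finset.abs_sum_le_sum_abs _ _).trans (Finset.sum_le_sum hstep)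
    _ = 2 * r * δ := by
        simp only [Finset.sum_const, Nat.card_Icc, add_tsub_cancel_right, nsmul_eq_mul]
        ring

/-- **Sum of squares of a `δ`-weak martingale** (extension of Dasgupta's identity):
if `X₀,…,X_r` is a `δ`-weak martingale with values in `[0,1]` and `Y_i = X_i − X_{i−1}`,
then `| 𝔼[X_r² − X₀²] − 𝔼[Σ_{i=1}^r Y_i²] | ≤ 2 r δ`. -/
theorem weak_martingale_sum_of_squares_expectation
    {Ω : Type*} [MeasurableSpace Ω] (μ : Measure Ω) [IsProbabilityMeasure μ]
    (r : ℕ) (hr : 0 < r) (δ : ℝ) (hδ0 : 0 ≤ δ)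
    (X : ℕ → Ω → ℝ) (hXmeas : ∀ i, Measurable (X i))
    (hrange : ∀ i ≤ r, ∀ᵐ ω ∂μ, X i ω ∈ Set.Icc (0 : ℝ) 1)
    (hmart : ∀ i, 1 ≤ i → i ≤ r → ∀ᵐ ω ∂μ,
      |(μ[X i | MeasurableSpace.comap (X (i - 1)) inferInstance]) ω
        - X (i - 1) ω| ≤ δ) :
    |(∫ ω, ((X r ω) ^ 2 - (X 0 ω) ^ 2) ∂μ)
      - ∫ ω, ∑ i ∈ Finset.Icc 1 r, (X i ω - X (i - 1) ω) ^ 2 ∂μ|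
      ≤ 2 * r * δ :=
  weak_martingale_sum_of_squares_expectation_general μ r δ X hXmeas hrange hmart
end

section
/- Let r ≥ 1, let p₁,…,p_r and p'₁,…,p'_r be sequences in [0,1] with p_r = p'_r = 1, define q_i := p_i·∏_{j<i}(1−p_j) and q'_i := p'_i·∏_{j<i}(1−p'_j), and let ε ≥ 0 be such that the two sequences are ε-ratio-close. Then for every i ∈ {1,…,r}: | q_i − q'_i | ≤ 3ε·min(p_i,p'_i)·( ∏_{j<i}(1−min(p_j,p'_j)) )·( 1/3 + Σ_{j≤i} min(p_j,p'_j) ). -/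
/-!
Write `m_j = min(p_j, p'_j)`. Ratio-closeness of `p_j` and of `1 - p_j` bounds `|p_j - p'_j|`
by both `ε m_j` and `ε (1 - m_j)`, hence by `2ε m_j (1 - m_j)`: relative to `1 - m_j`, the
failure probabilities `1 - p_j` and `1 - p'_j` differ by at most `2ε m_j`. Relative errors add up
along a product of factors bounded by `1 - m_j`, so the probabilities of failing the first `i - 1`
trials differ by at most `2ε (Σ_{j<i} m_j) ∏_{j<i} (1 - m_j)`, and the success factor `p_i` adds
one more relative error `ε`.
-/

open Finset

section OrderedRing

variable {R : Type*} [CommRing R] [LinearOrder R] [IsStrictOrderedRing R]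

theorem min_le_two_mul_mul_one_sub {x : R} (h0 : 0 ≤ x) (h1 : x ≤ 1) :
    min x (1 - x) ≤ 2 * x * (1 - x) := by
  rcases le_total x (1 - x) with h | h
  · rw [min_eq_left h]; nlinarith
  · rw [min_eq_right h]; nlinarith

theorem abs_mul_sub_mul_le {u u' A B P : R} (hu : 0 ≤ u) (hu' : 0 ≤ u') (hA : 0 ≤ A)
    (hB : 0 ≤ B) (hAP : A ≤ P) (hBP : B ≤ P) :
    |u * A - u' * B| ≤ |u - u'| * P + min u u' * |A - B| := by
  wlog h : u ≤ u' generalizing u u' A B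
  · simpa only [abs_sub_comm, min_comm] using this hu' hu hB hA hBP hAP (le_of_not_ge h)
  calc |u * A - u' * B| = |u * (A - B) + (u - u') * B| := by ring_nf
    _ ≤ u * |A - B| + |u - u'| * B := by
        refine (abs_add_le _ _).trans ?_
        rw [abs_mul, abs_mul, abs_of_nonneg hu, abs_of_nonneg hB]
    _ ≤ |u - u'| * P + min u u' * |A - B| := by
        rw [min_eq_left h]; nlinarith [abs_nonneg (u - u')]

theorem abs_prod_sub_prod_le_sum_mul_prod {ι : Type*} (s : Finset ι) {a b c δ : ι → R}
    (ha : ∀ j ∈ s, a j ∈ Set.Icc 0 (c j)) (hb : ∀ j ∈ s, b j ∈ Set.Icc 0 (c j))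
    (hab : ∀ j ∈ s, |a j - b j| ≤ δ j * c j) :
    |∏ j ∈ s, a j - ∏ j ∈ s, b j| ≤ (∑ j ∈ s, δ j) * ∏ j ∈ s, c j := by
  induction s using Finset.cons_induction with
  | empty => simp
  | cons x t _ ih =>
    simp only [forall_mem_cons] at ha hb hab
    have hc : 0 ≤ ∏ j ∈ t, c j := prod_nonneg fun j hj => (ha.2 j hj).1.trans (ha.2 j hj).2
    have hA : ∏ j ∈ t, a j ≤ ∏ j ∈ t, c j :=
      prod_le_prod (fun j hj => (ha.2 j hj).1) fun j hj => (ha.2 j hj).2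
    have hB : ∏ j ∈ t, b j ≤ ∏ j ∈ t, c j :=
      prod_le_prod (fun j hj => (hb.2 j hj).1) fun j hj => (hb.2 j hj).2
    rw [prod_cons, prod_cons, prod_cons, sum_cons]
    calc |a x * ∏ j ∈ t, a j - b x * ∏ j ∈ t, b j|
        ≤ |a x - b x| * ∏ j ∈ t, c j
          + min (a x) (b x) * |∏ j ∈ t, a j - ∏ j ∈ t, b j| :=
          abs_mul_sub_mul_le ha.1.1 hb.1.1 (prod_nonneg fun j hj => (ha.2 j hj).1)
            (prod_nonneg fun j hj => (hb.2 j hj).1) hA hB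
      _ ≤ δ x * c x * ∏ j ∈ t, c j + c x * ((∑ j ∈ t, δ j) * ∏ j ∈ t, c j) :=
          add_le_add (mul_le_mul_of_nonneg_right hab.1 hc)
            (mul_le_mul ((min_le_left _ _).trans ha.1.2) (ih ha.2 hb.2 hab.2) (abs_nonneg _)
              (ha.1.1.trans ha.1.2))
      _ = (δ x + ∑ j ∈ t, δ j) * (c x * ∏ j ∈ t, c j) := by ring

end OrderedRing

def RatioClose (ε a b : ℝ) : Prop :=
  a ≤ (1 + ε) * b ∧ b ≤ (1 + ε) * a

theorem RatioClose.abs_sub_le {ε a b : ℝ} (h : RatioClose ε a b) :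
    |a - b| ≤ ε * min a b := by
  obtain ⟨hab, hba⟩ := h
  rcases le_total a b with h | h
  · rw [min_eq_left h, abs_sub_le_iff]; constructor <;> linarith
  · rw [min_eq_right h, abs_sub_le_iff]; constructor <;> linarith

theorem abs_sub_le_two_mul_min_mul_one_sub_min {ε a b : ℝ} (hε : 0 ≤ ε)
    (ha : a ∈ Set.Icc 0 1) (hb : b ∈ Set.Icc 0 1) (h : RatioClose ε a b)
    (h' : RatioClose ε (1 - a) (1 - b)) :
    |a - b| ≤ 2 * ε * min a b * (1 - min a b) := by
  have hcompl : |a - b| ≤ ε * (1 - min a b) :=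
    calc |a - b| = |(1 - a) - (1 - b)| := by rw [abs_sub_comm]; ring_nf
      _ ≤ ε * min (1 - a) (1 - b) := h'.abs_sub_le
      _ ≤ ε * (1 - min a b) := by
          gcongr; rcases min_choice a b with hm | hm <;> rw [hm] <;> simp
  calc |a - b| ≤ ε * min (min a b) (1 - min a b) := by
        rw [mul_min_of_nonneg _ _ hε]; exact le_min h.abs_sub_le hcompl
    _ ≤ ε * (2 * min a b * (1 - min a b)) := by
        gcongr
        exact min_le_two_mul_mul_one_sub (le_min ha.1 hb.1) ((min_le_left _ _).trans ha.2)
    _ = 2 * ε * min a b * (1 - min a b) := by ring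

section FirstSuccess

variable {ι : Type*} {ε : ℝ} {p p' : ι → ℝ}

theorem abs_prod_one_sub_sub_prod_one_sub_le (s : Finset ι) (hε : 0 ≤ ε)
    (hp : ∀ j ∈ s, p j ∈ Set.Icc 0 1) (hp' : ∀ j ∈ s, p' j ∈ Set.Icc 0 1)
    (hclose : ∀ j ∈ s, RatioClose ε (p j) (p' j) ∧ RatioClose ε (1 - p j) (1 - p' j)) :
    |∏ j ∈ s, (1 - p j) - ∏ j ∈ s, (1 - p' j)|
      ≤ 2 * ε * (∑ j ∈ s, min (p j) (p' j)) * ∏ j ∈ s, (1 - min (p j) (p' j)) := by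
  rw [mul_sum]
  refine abs_prod_sub_prod_le_sum_mul_prod s (fun j hj => ?_) (fun j hj => ?_) fun j hj => ?_
  · exact ⟨by linarith [(hp j hj).2], by linarith [min_le_left (p j) (p' j)]⟩
  · exact ⟨by linarith [(hp' j hj).2], by linarith [min_le_right (p j) (p' j)]⟩
  · rw [sub_sub_sub_cancel_left, abs_sub_comm]
    exact abs_sub_le_two_mul_min_mul_one_sub_min hε (hp j hj) (hp' j hj) (hclose j hj).1
      (hclose j hj).2

theorem abs_mul_prod_one_sub_sub_mul_prod_one_sub_le (s : Finset ι) (hε : 0 ≤ ε) {u u' : ℝ}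
    (hu : 0 ≤ u) (hu' : 0 ≤ u') (huu' : RatioClose ε u u')
    (hp : ∀ j ∈ s, p j ∈ Set.Icc 0 1) (hp' : ∀ j ∈ s, p' j ∈ Set.Icc 0 1)
    (hclose : ∀ j ∈ s, RatioClose ε (p j) (p' j) ∧ RatioClose ε (1 - p j) (1 - p' j)) :
    |u * ∏ j ∈ s, (1 - p j) - u' * ∏ j ∈ s, (1 - p' j)|
      ≤ ε * min u u' * (∏ j ∈ s, (1 - min (p j) (p' j)))
          * (1 + 2 * ∑ j ∈ s, min (p j) (p' j)) := by
  have hfactor j (hj : j ∈ s) : 1 - p j ∈ Set.Icc 0 (1 - min (p j) (p' j)) :=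
    ⟨by linarith [(hp j hj).2], by linarith [min_le_left (p j) (p' j)]⟩
  have hfactor' j (hj : j ∈ s) : 1 - p' j ∈ Set.Icc 0 (1 - min (p j) (p' j)) :=
    ⟨by linarith [(hp' j hj).2], by linarith [min_le_right (p j) (p' j)]⟩
  calc _ ≤ |u - u'| * ∏ j ∈ s, (1 - min (p j) (p' j))
          + min u u' * |∏ j ∈ s, (1 - p j) - ∏ j ∈ s, (1 - p' j)| :=
        abs_mul_sub_mul_le hu hu' (prod_nonneg fun j hj => (hfactor j hj).1)
          (prod_nonneg fun j hj => (hfactor' j hj).1)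
          (prod_le_prod (fun j hj => (hfactor j hj).1) fun j hj => (hfactor j hj).2)
          (prod_le_prod (fun j hj => (hfactor' j hj).1) fun j hj => (hfactor' j hj).2)
    _ ≤ ε * min u u' * ∏ j ∈ s, (1 - min (p j) (p' j))
          + min u u' * (2 * ε * (∑ j ∈ s, min (p j) (p' j))
            * ∏ j ∈ s, (1 - min (p j) (p' j))) := by
        gcongr
        · exact prod_nonneg fun j hj => (hfactor j hj).1.trans (hfactor j hj).2
        · exact huu'.abs_sub_le
        · exact abs_prod_one_sub_sub_prod_one_sub_le s hε hp hp' hclose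
    _ = _ := by ring

end FirstSuccess

theorem first_success_probabilities_pointwise_close_general
    (r : ℕ) (p p' : ℕ → ℝ) (ε : ℝ) (hε : 0 ≤ ε)
    (hp : ∀ i ∈ Finset.Icc 1 r, p i ∈ Set.Icc (0 : ℝ) 1)
    (hp' : ∀ i ∈ Finset.Icc 1 r, p' i ∈ Set.Icc (0 : ℝ) 1)
    (hclose : ∀ i ∈ Finset.Icc 1 r,
      p i ≤ (1 + ε) * p' i ∧ p' i ≤ (1 + ε) * p i ∧
      1 - p i ≤ (1 + ε) * (1 - p' i) ∧ 1 - p' i ≤ (1 + ε) * (1 - p i)) :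
    ∀ i ∈ Finset.Icc 1 r,
      |p i * (∏ j ∈ Finset.Icc 1 (i - 1), (1 - p j))
          - p' i * ∏ j ∈ Finset.Icc 1 (i - 1), (1 - p' j)|
        ≤ 3 * ε * min (p i) (p' i)
            * (∏ j ∈ Finset.Icc 1 (i - 1), (1 - min (p j) (p' j)))
            * (1 / 3 + ∑ j ∈ Finset.Icc 1 i, min (p j) (p' j)) := by
  intro i hi
  have hupto : Icc 1 i ⊆ Icc 1 r := Icc_subset_Icc le_rfl (mem_Icc.1 hi).2
  have hprefix : Icc 1 (i - 1) ⊆ Icc 1 i := Icc_subset_Icc le_rfl (i.sub_le 1)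
  have hclose' j (hj : j ∈ Icc 1 r) :
      RatioClose ε (p j) (p' j) ∧ RatioClose ε (1 - p j) (1 - p' j) :=
    have ⟨h₁, h₂, h₃, h₄⟩ := hclose j hj
    ⟨⟨h₁, h₂⟩, h₃, h₄⟩
  have hbound := abs_mul_prod_one_sub_sub_mul_prod_one_sub_le (Icc 1 (i - 1)) hε (hp i hi).1
    (hp' i hi).1 (hclose' i hi).1 (fun j hj => hp j (hupto (hprefix hj)))
    (fun j hj => hp' j (hupto (hprefix hj)))
    fun j hj => hclose' j (hupto (hprefix hj))
  have hsum : ∑ j ∈ Icc 1 (i - 1), min (p j) (p' j) ≤ ∑ j ∈ Icc 1 i, min (p j) (p' j) :=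
    sum_le_sum_of_subset_of_nonneg hprefix fun j hj _ =>
      le_min (hp j (hupto hj)).1 (hp' j (hupto hj)).1
  have hsum0 : 0 ≤ ∑ j ∈ Icc 1 (i - 1), min (p j) (p' j) :=
    sum_nonneg fun j hj => le_min (hp j (hupto (hprefix hj))).1 (hp' j (hupto (hprefix hj))).1
  have hsurvival : 0 ≤ ∏ j ∈ Icc 1 (i - 1), (1 - min (p j) (p' j)) :=
    prod_nonneg fun j hj => by linarith [min_le_left (p j) (p' j), (hp j (hupto (hprefix hj))).2]
  calc _ ≤ _ := hbound
    _ ≤ ε * min (p i) (p' i) * (∏ j ∈ Icc 1 (i - 1), (1 - min (p j) (p' j)))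
          * (1 + 3 * ∑ j ∈ Icc 1 i, min (p j) (p' j)) := by
        have := le_min (hp i hi).1 (hp' i hi).1
        gcongr
        linarith
    _ = _ := by ring

/-- **First-success probabilities of ratio-close Bernoulli sequences are pointwise
close.** If `p` and `p'` are `ε`-ratio-close sequences in `[0,1]` with
`p_r = p'_r = 1`, and `q_i = p_i·∏_{j<i}(1−p_j)` (resp. `q'_i`), then for every
`i ∈ {1,…,r}`:
`|q_i − q'_i| ≤ 3ε min(p_i,p'_i) (∏_{j<i}(1−min(p_j,p'_j))) (1/3 + Σ_{j≤i} min(p_j,p'_j))`. -/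
theorem first_success_probabilities_pointwise_close
    (r : ℕ) (hr : 1 ≤ r) (p p' : ℕ → ℝ) (ε : ℝ) (hε : 0 ≤ ε)
    (hp : ∀ i ∈ Finset.Icc 1 r, p i ∈ Set.Icc (0 : ℝ) 1)
    (hp' : ∀ i ∈ Finset.Icc 1 r, p' i ∈ Set.Icc (0 : ℝ) 1)
    (hpr : p r = 1) (hp'r : p' r = 1)
    (hclose : ∀ i ∈ Finset.Icc 1 r,
      p i ≤ (1 + ε) * p' i ∧ p' i ≤ (1 + ε) * p i ∧
      1 - p i ≤ (1 + ε) * (1 - p' i) ∧ 1 - p' i ≤ (1 + ε) * (1 - p i)) :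
    ∀ i ∈ Finset.Icc 1 r,
      |p i * (∏ j ∈ Finset.Icc 1 (i - 1), (1 - p j))
          - p' i * ∏ j ∈ Finset.Icc 1 (i - 1), (1 - p' j)|
        ≤ 3 * ε * min (p i) (p' i)
            * (∏ j ∈ Finset.Icc 1 (i - 1), (1 - min (p j) (p' j)))
            * (1 / 3 + ∑ j ∈ Finset.Icc 1 i, min (p j) (p' j)) :=
  first_success_probabilities_pointwise_close_general r p p' ε hε hp hp' hclose
end
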